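/- Grönwall-type matrix comparison: Let A be Metzler and let v : [0,∞) → ℝ^m satisfy v(t) = v(0) + ∫_0^t u(s) ds with u(s) ≤ A v(s) componentwise for all s. Then v(t) ≤ e^{At} v(0) componentwise for all t ≥ 0. -/

import Mathlib

/-!
Fix `T ≥ 0` and `i`, and let `p(s)` be the `i`-th row of `e^{(T - s)A}`. Because `A` is Metzler,
`A + c • 1` is entrywise nonnegative for large `c`, so `e^{τA} = e^{-cτ} e^{τ(A + c • 1)}` is
entrywise nonnegative for `τ ≥ 0`; in particular `p(s) ≥ 0` for `s ≤ T`. Moreover `p' = -p A`,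
and `v` is absolutely continuous with `v' = u` almost everywhere, so
`(p ⬝ᵥ v)' = p ⬝ᵥ (u - A v) ≤ 0` a.e. on `[0, T]`. Integrating gives
`v(T)ᵢ = p(T) ⬝ᵥ v(T) ≤ p(0) ⬝ᵥ v(0) = (e^{TA} v(0))ᵢ`.
-/

open MeasureTheory intervalIntegral Set Matrix

namespace Matrix

variable {n : Type*}

def IsMetzler (A : Matrix n n ℝ) : Prop := ∀ i j, i ≠ j → 0 ≤ A i j

lemma IsMetzler.smul {A : Matrix n n ℝ} (hA : A.IsMetzler) {t : ℝ} (ht : 0 ≤ t) :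
    (t • A).IsMetzler :=
  fun i j hij => mul_nonneg ht (hA i j hij)

variable [Fintype n] [DecidableEq n]

lemma exp_apply_nonneg {B : Matrix n n ℝ} (hB : ∀ i j, 0 ≤ B i j) (i j : n) :
    0 ≤ NormedSpace.exp B i j := by
  have hsum : HasSum (fun k : ℕ => ((k.factorial : ℝ)⁻¹ • B ^ k) i j) (NormedSpace.exp B i j) :=
    open scoped Norms.Operator in
    Pi.hasSum.1 (Pi.hasSum.1 (NormedSpace.exp_series_hasSum_exp' (𝕂 := ℝ) B) i) j
  exact hsum.nonneg fun k => mul_nonneg (by positivity) (pow_apply_nonneg hB k i j)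

lemma exp_add_smul_one (M : Matrix n n ℝ) (r : ℝ) :
    NormedSpace.exp (M + r • 1) = Real.exp r • NormedSpace.exp M := by
  rw [exp_add_of_commute _ _ ((Commute.one_right M).smul_right r), smul_one_eq_diagonal,
    exp_diagonal, Pi.exp_def, ← Real.exp_eq_exp_ℝ, ← smul_one_eq_diagonal, Matrix.mul_smul,
    mul_one]

lemma IsMetzler.exp_apply_nonneg {A : Matrix n n ℝ} (hA : A.IsMetzler) (i j : n) :
    0 ≤ NormedSpace.exp A i j := by
  obtain ⟨c, hc⟩ : ∃ c : ℝ, ∀ k, 0 ≤ A k k + c :=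
    ⟨∑ k, |A k k|, fun k => by
      have := Finset.single_le_sum (fun l _ => abs_nonneg (A l l)) (Finset.mem_univ k)
      linarith [neg_abs_le (A k k)]⟩
  have hshift : ∀ k l, 0 ≤ (A + c • 1) k l := by
    intro k l
    rcases eq_or_ne k l with rfl | hkl
    · simpa using hc k
    · simpa [hkl] using hA k l hkl
  rw [← add_neg_cancel_right A (c • 1), ← neg_smul, exp_add_smul_one, smul_apply, smul_eq_mul]
  exact mul_nonneg (Real.exp_pos _).le (Matrix.exp_apply_nonneg hshift i j)

lemma hasDerivAt_exp_sub_smul (A : Matrix n n ℝ) (T s : ℝ) :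
    HasDerivAt (fun s => NormedSpace.exp ((T - s) • A)) (-(NormedSpace.exp ((T - s) • A) * A)) s :=
  open scoped Norms.Operator in
  (hasDerivAt_exp_smul_const (𝕂 := ℝ) A (T - s)).comp_const_sub T s

end Matrix

theorem integral_deriv_mul_eq_sub_of_primitive {g g' F f : ℝ → ℝ} {a b : ℝ}
    (hg : ∀ x, HasDerivAt g (g' x) x) (hg' : Continuous g')
    (hf : IntervalIntegrable f volume a b) (hF : ∀ x ∈ uIcc a b, F x = F a + ∫ t in a..x, f t) :
    ∫ x in a..b, (g' x * F x + g x * f x) = g b * F b - g a * F a := by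
  set G : ℝ → ℝ := fun x => F a + ∫ t in a..x, f t
  have hg_deriv : deriv g = g' := funext fun x => (hg x).deriv
  have hgC1 : ContDiff ℝ 1 g :=
    contDiff_one_iff_deriv.2 ⟨fun x => (hg x).differentiableAt, hg_deriv ▸ hg'⟩
  have hG : AbsolutelyContinuousOnInterval G a b :=
    contDiffOn_const.absolutelyContinuousOnInterval.add
      (hf.absolutelyContinuousOnInterval_intervalIntegral left_mem_uIcc)
  have hibp := hgC1.contDiffOn.absolutelyContinuousOnInterval.integral_deriv_mul_eq_sub hG
  have hGa : G a = F a := by simp [G]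
  have hGb : G b = F b := (hF b right_mem_uIcc).symm
  rw [← hGa, ← hGb, ← hibp]
  refine integral_congr_ae ?_
  filter_upwards [hf.ae_hasDerivAt_integral] with x hx hxab
  have hx' := uIoc_subset_uIcc hxab
  rw [hg_deriv, ((hx hx' a left_mem_uIcc).const_add (F a)).deriv, hF x hx']

theorem integral_deriv_dotProduct_eq_sub_of_primitive {ι : Type*} [Fintype ι]
    {P P' v u : ℝ → ι → ℝ} {a b : ℝ}
    (hP : ∀ x, HasDerivAt P (P' x) x) (hP' : Continuous P')
    (hu : IntervalIntegrable u volume a b) (hv : ∀ x ∈ uIcc a b, v x = v a + ∫ t in a..x, u t) :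
    ∫ x in a..b, (P' x ⬝ᵥ v x + P x ⬝ᵥ u x) = P b ⬝ᵥ v b - P a ⬝ᵥ v a := by
  have hu_apply (j : ι) : IntervalIntegrable (u · j) volume a b := ⟨hu.1.eval j, hu.2.eval j⟩
  have hv_apply (j : ι) : ∀ x ∈ uIcc a b, v x j = v a j + ∫ t in a..x, u t j := fun x hx => by
    rw [hv x hx, Pi.add_apply]
    exact congrArg _ ((ContinuousLinearMap.proj (R := ℝ) j).intervalIntegral_comp_comm
      (hu.mono_set (uIcc_subset_uIcc left_mem_uIcc hx))).symm
  have hint (j : ι) :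
      IntervalIntegrable (fun x => P' x j * v x j + P x j * u x j) volume a b := by
    have hvc : ContinuousOn (v · j) (uIcc a b) :=
      (continuousOn_const.add (continuousOn_primitive_interval' (hu_apply j) left_mem_uIcc)).congr
        (hv_apply j)
    exact ((continuous_apply j).comp hP').continuousOn.mul hvc |>.intervalIntegrable |>.add
      ((hu_apply j).continuousOn_mul ((continuous_apply j).comp
        (continuous_iff_continuousAt.2 fun x => (hP x).continuousAt)).continuousOn)
  simp only [dotProduct, ← Finset.sum_add_distrib]
  rw [integral_finsetSum fun j _ => hint j, ← Finset.sum_sub_distrib]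
  exact Finset.sum_congr rfl fun j _ => integral_deriv_mul_eq_sub_of_primitive
    (fun x => hasDerivAt_pi.1 (hP x) j) ((continuous_apply j).comp hP') (hu_apply j) (hv_apply j)

/-- Grönwall-type matrix comparison (integral form): if `A` is Metzler and
`v(t) = v(0) + ∫_0^t u(s) ds` with `u(s) ≤ A v(s)` componentwise, then
`v(t) ≤ e^{At} v(0)` componentwise for all `t ≥ 0`. -/
theorem gronwall_matrix_comparison {m : ℕ} (A : Matrix (Fin m) (Fin m) ℝ)
    (hMetzler : ∀ i j : Fin m, i ≠ j → 0 ≤ A i j)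
    (v u : ℝ → Fin m → ℝ)
    (hint : ∀ t : ℝ, 0 ≤ t → IntervalIntegrable u volume 0 t)
    (hv : ∀ t : ℝ, 0 ≤ t → v t = v 0 + ∫ s in (0:ℝ)..t, u s)
    (hu : ∀ s : ℝ, 0 ≤ s → u s ≤ A.mulVec (v s)) :
    ∀ t : ℝ, 0 ≤ t → v t ≤ (NormedSpace.exp (t • A)).mulVec (v 0) := by
  intro T hT i
  set M : ℝ → Matrix (Fin m) (Fin m) ℝ := fun s => NormedSpace.exp ((T - s) • A)
  have hM : ∀ s, HasDerivAt M (-(M s * A)) s := hasDerivAt_exp_sub_smul A T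
  have hM_cont : Continuous M :=
    open scoped Matrix.Norms.Operator in continuous_iff_continuousAt.2 fun s => (hM s).continuousAt
  have hibp := integral_deriv_dotProduct_eq_sub_of_primitive (P := fun s => M s i)
    (P' := fun s => -(M s i ᵥ* A)) (fun s => hasDerivAt_pi.1 (hM s) i)
    (((continuous_apply i).comp hM_cont).matrix_vecMul continuous_const).neg (hint T hT)
    (fun x hx => hv x (by simpa [hT] using hx.1))
  have hintegrand (x : ℝ) :
      -(M x i ᵥ* A) ⬝ᵥ v x + M x i ⬝ᵥ u x = -(M x i ⬝ᵥ (A *ᵥ v x - u x)) := by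
    rw [neg_dotProduct, ← dotProduct_mulVec, dotProduct_sub]
    ring
  have hdefect : 0 ≤ ∫ x in 0..T, M x i ⬝ᵥ (A *ᵥ v x - u x) :=
    integral_nonneg hT fun x hx => dotProduct_nonneg_of_nonneg
      (fun j => (IsMetzler.smul hMetzler (sub_nonneg.2 hx.2)).exp_apply_nonneg i j)
      (sub_nonneg.2 (hu x hx.1))
  simp only [hintegrand, intervalIntegral.integral_neg] at hibp
  have hdual : M T i ⬝ᵥ v T ≤ M 0 i ⬝ᵥ v 0 := by linarith
  simpa [M, mulVec, dotProduct, one_apply] using hdual
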